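/- Let p ≥ 1, let φ = (φ_1, …, φ_p) ∈ ℝ^p, and let γ : ℤ → ℝ be even and satisfy γ(h) = Σ_{j=1}^p φ_j γ(h−j) for every integer h ≥ 1. Define γ_d(h) = 2γ(h) − γ(h+1) − γ(h−1), assume γ_d(0) ≠ 0, and set ρ_d(h) = γ_d(h)/γ_d(0). Let b ∈ ℝ^p be the vector b = (ρ_d(1) + 1/2, ρ_d(2), ρ_d(3), …, ρ_d(p))ᵀ and let M be the p × p matrix whose first row is (1/2, −1/2, −(1/2 + ρ_d(1)), …, −(1/2 + Σ_{ℓ=1}^{p−2} ρ_d(ℓ))) and whose entry in row i (for 2 ≤ i ≤ p) and column j is ρ_d(i − j) (interpreted via evenness ρ_d(−k) = ρ_d(k)). Then b = M φ. -/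

import Mathlib

/-!
Multiplying every row by `γ_d(0)` clears the normalisation. The second difference `γ_d` is a
linear combination of shifts of `γ`, so it satisfies the same autoregressive recurrence, from
lag 2 on; these are rows `2, …, p`. For the first row, evenness gives `γ_d(0) = 2(γ(0) - γ(1))`
and the sums `∑ ρ_d(ℓ)` telescope, so that `γ_d(0) M_{1j} = γ(j-1) - γ(j-2)`; the row is then
the recurrence at `h = 1` minus the recurrence at `h = 2`, with negative lags folded by evenness.
-/

open Finset

section Ring

variable {R : Type*} [CommRing R]

def secondDiff (γ : ℤ → R) (h : ℤ) : R := 2 * γ h - γ (h + 1) - γ (h - 1)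

theorem secondDiff_zero_of_even {γ : ℤ → R} (heven : ∀ h, γ (-h) = γ h) :
    secondDiff γ 0 = 2 * (γ 0 - γ 1) := by
  rw [secondDiff, zero_add, zero_sub, heven]
  ring

theorem sum_Icc_secondDiff (γ : ℤ → R) {n : ℤ} (hn : 0 ≤ n) :
    ∑ ℓ ∈ Icc 1 n, secondDiff γ ℓ = γ 1 - γ 0 - (γ (n + 1) - γ n) := by
  induction n, hn using Int.leInduction with
  | base => simp
  | succ n hn ih =>
    rw [← Order.succ_eq_add_one, ← insert_Icc_right_eq_Icc_succ (by simp; omega),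
      sum_insert (by simp), Order.succ_eq_add_one, ih, secondDiff, add_sub_cancel_right]
    ring

theorem secondDiff_recurrence {p : ℕ} (φ : Fin p → R) {γ : ℤ → R} {n₀ : ℤ}
    (hrec : ∀ h, n₀ ≤ h → γ h = ∑ j : Fin p, φ j * γ (h - ((j : ℤ) + 1))) (h : ℤ)
    (hh : n₀ + 1 ≤ h) :
    secondDiff γ h = ∑ j : Fin p, φ j * secondDiff γ (h - ((j : ℤ) + 1)) := by
  rw [secondDiff, hrec h (by omega), hrec (h + 1) (by omega), hrec (h - 1) (by omega), mul_sum,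
    ← sum_sub_distrib, ← sum_sub_distrib]
  refine sum_congr rfl fun j _ => ?_
  rw [secondDiff, sub_add_eq_add_sub, sub_right_comm h]
  ring

theorem sub_eq_sum_mul_sub_of_recurrence {p : ℕ} (φ : Fin p → R) {γ : ℤ → R}
    (heven : ∀ h, γ (-h) = γ h)
    (hrec : ∀ h, 1 ≤ h → γ h = ∑ j : Fin p, φ j * γ (h - ((j : ℤ) + 1))) :
    γ 1 - γ 2 = ∑ j : Fin p, φ j * (γ j - γ (j - 1)) := by
  rw [hrec 1 le_rfl, hrec 2 one_le_two, ← sum_sub_distrib]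
  refine sum_congr rfl fun j _ => ?_
  rw [show (1 : ℤ) - (j + 1) = -j by ring, show (2 : ℤ) - (j + 1) = -(j - 1) by ring, heven,
    heven, mul_sub]

end Ring

section Field

variable {K : Type*} [Field K] [CharZero K] {γ : ℤ → K}

def diffAutocorr (γ : ℤ → K) (h : ℤ) : K := secondDiff γ h / secondDiff γ 0

theorem secondDiff_zero_mul_diffAutocorr_one_add_half (heven : ∀ h, γ (-h) = γ h)
    (h0 : secondDiff γ 0 ≠ 0) : secondDiff γ 0 * (diffAutocorr γ 1 + 1 / 2) = γ 1 - γ 2 := by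
  rw [diffAutocorr, mul_add, mul_div_cancel₀ _ h0, secondDiff_zero_of_even heven, secondDiff,
    one_add_one_eq_two, sub_self]
  ring

theorem secondDiff_zero_mul_firstRow (heven : ∀ h, γ (-h) = γ h) (h0 : secondDiff γ 0 ≠ 0)
    (j : ℕ) :
    secondDiff γ 0 * (if j = 0 then 1 / 2
      else -(1 / 2 + ∑ ℓ ∈ Icc (1 : ℤ) (j - 1), diffAutocorr γ ℓ)) = γ j - γ (j - 1) := by
  split_ifs with hj
  · rw [hj, secondDiff_zero_of_even heven, Nat.cast_zero, zero_sub, heven]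
    ring
  · have htel := sum_Icc_secondDiff γ (n := (j : ℤ) - 1) (by omega)
    rw [sub_add_cancel] at htel
    simp only [diffAutocorr]
    rw [← sum_div, mul_neg, mul_add, mul_div_cancel₀ _ h0, htel, secondDiff_zero_of_even heven]
    ring

end Field

theorem diff_autocorr_linear_system_general (p : ℕ) (φ : Fin p → ℝ) (γ : ℤ → ℝ)
    (heven : ∀ h : ℤ, γ (-h) = γ h)
    (hYW : ∀ h : ℤ, 1 ≤ h → γ h = ∑ j : Fin p, φ j * γ (h - ((j : ℤ) + 1)))
    (γd : ℤ → ℝ) (hγd : ∀ h : ℤ, γd h = 2 * γ h - γ (h + 1) - γ (h - 1))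
    (h0 : γd 0 ≠ 0)
    (ρd : ℤ → ℝ) (hρd : ∀ h : ℤ, ρd h = γd h / γd 0)
    (b : Fin p → ℝ)
    (hb : ∀ i : Fin p, b i = if (i : ℕ) = 0 then ρd 1 + 1 / 2 else ρd ((i : ℤ) + 1))
    (M : Matrix (Fin p) (Fin p) ℝ)
    (hM : ∀ i j : Fin p,
      M i j =
        if (i : ℕ) = 0 then
          (if (j : ℕ) = 0 then 1 / 2
           else -(1 / 2 + ∑ ℓ ∈ Finset.Icc (1 : ℤ) ((j : ℤ) - 1), ρd ℓ))
        else ρd ((i : ℤ) - (j : ℤ))) :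
    b = M.mulVec φ := by
  obtain rfl : γd = secondDiff γ := funext hγd
  obtain rfl : ρd = diffAutocorr γ := funext hρd
  funext i
  refine mul_left_cancel₀ h0 ?_
  simp only [hb, hM, Matrix.mulVec, dotProduct, mul_sum]
  by_cases hi : (i : ℕ) = 0
  · simp only [hi, if_true]
    calc _ = γ 1 - γ 2 := secondDiff_zero_mul_diffAutocorr_one_add_half heven h0
      _ = ∑ j : Fin p, φ j * (γ j - γ (j - 1)) := sub_eq_sum_mul_sub_of_recurrence φ heven hYW
      _ = _ := sum_congr rfl fun j _ => by
        rw [← secondDiff_zero_mul_firstRow heven h0, mul_left_comm, mul_comm (φ j)]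
  · simp only [hi, if_false]
    calc _ = secondDiff γ (i + 1) := mul_div_cancel₀ _ h0
      _ = ∑ j : Fin p, φ j * secondDiff γ (i + 1 - ((j : ℤ) + 1)) :=
        secondDiff_recurrence φ hYW _ (by omega)
      _ = _ := sum_congr rfl fun j _ => by
        rw [add_sub_add_right_eq_sub, diffAutocorr, ← mul_assoc, mul_div_cancel₀ _ h0, mul_comm]

/-- Yule–Walker-type linear system for the differenced autocorrelations: if the even function
`γ : ℤ → ℝ` satisfies `γ h = ∑_{j=1}^p φ j * γ (h - j)` for all `h ≥ 1`, and `ρd` denotes the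
autocorrelation of the differenced series, then the vector
`b = (ρd 1 + 1/2, ρd 2, …, ρd p)ᵀ` equals `M φ`, where the first row of `M` is
`(1/2, -1/2, -(1/2 + ρd 1), …, -(1/2 + ∑_{ℓ=1}^{p-2} ρd ℓ))` and the remaining rows have
entries `ρd (i - j)`. -/
theorem diff_autocorr_linear_system (p : ℕ) (hp : 1 ≤ p) (φ : Fin p → ℝ) (γ : ℤ → ℝ)
    (heven : ∀ h : ℤ, γ (-h) = γ h)
    (hYW : ∀ h : ℤ, 1 ≤ h → γ h = ∑ j : Fin p, φ j * γ (h - ((j : ℤ) + 1)))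
    (γd : ℤ → ℝ) (hγd : ∀ h : ℤ, γd h = 2 * γ h - γ (h + 1) - γ (h - 1))
    (h0 : γd 0 ≠ 0)
    (ρd : ℤ → ℝ) (hρd : ∀ h : ℤ, ρd h = γd h / γd 0)
    (b : Fin p → ℝ)
    (hb : ∀ i : Fin p, b i = if (i : ℕ) = 0 then ρd 1 + 1 / 2 else ρd ((i : ℤ) + 1))
    (M : Matrix (Fin p) (Fin p) ℝ)
    (hM : ∀ i j : Fin p,
      M i j =
        if (i : ℕ) = 0 then
          (if (j : ℕ) = 0 then 1 / 2
           else -(1 / 2 + ∑ ℓ ∈ Finset.Icc (1 : ℤ) ((j : ℤ) - 1), ρd ℓ))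
        else ρd ((i : ℤ) - (j : ℤ))) :
    b = M.mulVec φ :=
  diff_autocorr_linear_system_general p φ γ heven hYW γd hγd h0 ρd hρd b hb M hM
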